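/- Let Q(x_{0:K}) = π_0(x_0) ∏_{k=1}^K F_k(x_k|x_{k-1}) be a Markov proposal with marginals q_k, and let P(x_{0:K}) = π(x_K) ∏_{k=0}^{K-1} B_k(x_k|x_{k+1}) for backward Markov kernels B_k. Then KL(Q||P) = KL(q_K||π) + E_{q_K}[KL(Q(·|x_K)||P(·|x_K))], and hence KL(Q||P) is minimized over choices of backward kernels by B_k^{opt}(x_k|x_{k+1}) = q_k(x_k)F_{k+1}(x_{k+1}|x_k)/q_{k+1}(x_{k+1}), achieving the minimum value KL(q_K||π). -/

import Mathlib

/-!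
Telescoping the marginals gives `Q(x) = q_K(x_K) ∏ₖ B^opt_k(x_k | x_{k+1})`, so
`log (Q / P) = log (q_K / π)(x_K) + log (∏ B^opt / ∏ B)`. The first term integrates against `Q`
to `KL(q_K ‖ π)` because the `x_K`-marginal of `Q` is `q_K`. The second term has nonnegative
integral by Gibbs' inequality applied one coordinate at a time: integrating out `x_0` first,
`B^opt_0(· | x_1)` and `B_0(· | x_1)` are probability densities in `x_0`. For `B = B^opt` it vanishes.
-/

open MeasureTheory Finset

section Chains

variable {α : Type*} {K : ℕ}

def chainWeight (F : Fin K → α → α → ℝ) (x : Fin (K + 1) → α) : ℝ :=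
  ∏ k, F k (x k.castSucc) (x k.succ)

/-- `timeReversal q F k y x = B^opt_k(x | y)`. -/
noncomputable def timeReversal (q : Fin (K + 1) → α → ℝ) (F : Fin K → α → α → ℝ) (k : Fin K)
    (y x : α) : ℝ :=
  q k.castSucc x * F k x y / q k.succ y

lemma chainWeight_cons (F : Fin (K + 1) → α → α → ℝ) (a : α) (r : Fin (K + 1) → α) :
    chainWeight F (Fin.cons a r) = F 0 a (r 0) * chainWeight (fun k => F k.succ) r := by
  simp [chainWeight, Fin.prod_univ_succ]

lemma chainWeight_pos {F : Fin K → α → α → ℝ} (hF : ∀ k y x, 0 < F k y x) (x : Fin (K + 1) → α) :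
    0 < chainWeight F x :=
  prod_pos fun _ _ => hF _ _ _

variable {q : Fin (K + 1) → α → ℝ} {F : Fin K → α → α → ℝ}

lemma chainWeight_timeReversal_pos (hq : ∀ k x, 0 < q k x) (hF : ∀ k y x, 0 < F k y x)
    (x : Fin (K + 1) → α) : 0 < chainWeight (fun k => flip (timeReversal q F k)) x :=
  chainWeight_pos (fun _ _ _ => div_pos (mul_pos (hq _ _) (hF _ _ _)) (hq _ _)) x

lemma chainWeight_timeReversal_mul (hq : ∀ k x, q k x ≠ 0) (x : Fin (K + 1) → α) :
    chainWeight (fun k => flip (timeReversal q F k)) x * q (Fin.last K) (x (Fin.last K)) =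
      q 0 (x 0) * chainWeight F x := by
  have hsucc : ∏ k : Fin K, q k.succ (x k.succ) ≠ 0 := prod_ne_zero_iff.2 fun _ _ => hq _ _
  have htele : (∏ k : Fin K, q k.castSucc (x k.castSucc)) * q (Fin.last K) (x (Fin.last K)) =
      q 0 (x 0) * ∏ k : Fin K, q k.succ (x k.succ) :=
    (Fin.prod_univ_castSucc fun j => q j (x j)).symm.trans (Fin.prod_univ_succ fun j => q j (x j))
  simp only [chainWeight, flip, timeReversal, prod_div_distrib, prod_mul_distrib]
  field_simp
  linear_combination (∏ k, F k (x k.castSucc) (x k.succ)) * htele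

lemma log_chain_div_eq {π : α → ℝ} (hq : ∀ k x, 0 < q k x) (hF : ∀ k y x, 0 < F k y x)
    (hπ : ∀ x, 0 < π x) {x : Fin (K + 1) → α} {w : ℝ} (hw : 0 < w) :
    Real.log (q 0 (x 0) * chainWeight F x / (π (x (Fin.last K)) * w)) =
      Real.log (q (Fin.last K) (x (Fin.last K)) / π (x (Fin.last K))) +
        Real.log (chainWeight (fun k => flip (timeReversal q F k)) x / w) := by
  rw [← chainWeight_timeReversal_mul (fun k x => (hq k x).ne'), mul_comm, mul_div_mul_comm,
    Real.log_mul (div_pos (hq _ _) (hπ _)).ne' (div_pos (chainWeight_timeReversal_pos hq hF x) hw).ne']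

lemma mul_log_chainWeight_timeReversal_div_cons {q : Fin (K + 2) → α → ℝ}
    {F B : Fin (K + 1) → α → α → ℝ} (hq : ∀ k x, 0 < q k x) (hF : ∀ k y x, 0 < F k y x)
    (hB : ∀ k y x, 0 < B k y x) (a : α) (r : Fin (K + 1) → α) :
    q 0 ((Fin.cons a r : Fin (K + 2) → α) 0) * chainWeight F (Fin.cons a r) *
        Real.log (chainWeight (fun k => flip (timeReversal q F k)) (Fin.cons a r) /
          chainWeight (fun k => flip (B k)) (Fin.cons a r)) =
      q 0 a * F 0 a (r 0) * chainWeight (fun k => F k.succ) r *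
        (Real.log (q 0 a * F 0 a (r 0) / (q 1 (r 0) * B 0 (r 0) a)) +
          Real.log (chainWeight (fun k => flip (timeReversal (fun j => q j.succ)
            (fun k => F k.succ) k)) r / chainWeight (fun k => flip (B k.succ)) r)) := by
  have hrev0 : 0 < flip (timeReversal q F 0) a (r 0) :=
    div_pos (mul_pos (hq _ _) (hF _ _ _)) (hq _ _)
  have hB0 : 0 < flip (B 0) a (r 0) := hB _ _ _
  have hrev : 0 < chainWeight (fun k => flip (timeReversal q F k.succ)) r :=
    chainWeight_timeReversal_pos (q := fun j => q j.succ) (fun _ _ => hq _ _) (fun _ _ _ => hF _ _ _) r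
  have hback := chainWeight_pos (F := fun k => flip (B k.succ)) (fun _ _ _ => hB _ _ _) r
  simp only [chainWeight_cons, Fin.cons_zero]
  rw [mul_div_mul_comm (flip (timeReversal q F 0) a (r 0)), ← mul_assoc,
    Real.log_mul (div_pos hrev0 hB0).ne' (div_pos hrev hback).ne']
  simp only [flip, timeReversal, div_div]
  rfl

end Chains

section Fubini

variable {α : Type*} [MeasurableSpace α] {μ : Measure α} [SigmaFinite μ] {n : ℕ}

lemma coe_piFinSuccAbove_zero_symm :
    ⇑(MeasurableEquiv.piFinSuccAbove (fun _ : Fin (n + 1) => α) 0).symm =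
      fun p : α × (Fin n → α) => (Fin.cons p.1 p.2 : Fin (n + 1) → α) := by
  funext p
  simp [MeasurableEquiv.piFinSuccAbove_symm_apply, Fin.consEquiv]

lemma measurePreserving_fin_cons :
    MeasurePreserving (fun p : α × (Fin n → α) => (Fin.cons p.1 p.2 : Fin (n + 1) → α))
      (μ.prod (Measure.pi fun _ => μ)) (Measure.pi fun _ => μ) :=
  (coe_piFinSuccAbove_zero_symm (α := α) (n := n)) ▸
    (measurePreserving_piFinSuccAbove (fun _ => μ) 0).symm _

lemma measurableEmbedding_fin_cons :
    MeasurableEmbedding (fun p : α × (Fin n → α) => (Fin.cons p.1 p.2 : Fin (n + 1) → α)) :=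
  (coe_piFinSuccAbove_zero_symm (α := α) (n := n)) ▸
    (MeasurableEquiv.piFinSuccAbove (fun _ : Fin (n + 1) => α) 0).symm.measurableEmbedding

variable {G : (Fin (n + 1) → α) → ℝ}

lemma MeasureTheory.Integrable.comp_fin_cons (hG : Integrable G (Measure.pi fun _ => μ)) :
    Integrable (fun p : α × (Fin n → α) => G (Fin.cons p.1 p.2))
      (μ.prod (Measure.pi fun _ => μ)) :=
  (measurePreserving_fin_cons.integrable_comp_emb measurableEmbedding_fin_cons).2 hG

lemma integral_pi_fin_succ (hG : Integrable G (Measure.pi fun _ => μ)) :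
    ∫ x, G x ∂(Measure.pi fun _ => μ) =
      ∫ r, ∫ a, G (Fin.cons a r) ∂μ ∂(Measure.pi fun _ => μ) := by
  rw [← measurePreserving_fin_cons.integral_comp measurableEmbedding_fin_cons,
    integral_prod_symm _ hG.comp_fin_cons]

lemma MeasureTheory.Integrable.integral_fin_cons (hG : Integrable G (Measure.pi fun _ => μ)) :
    Integrable (fun r => ∫ a, G (Fin.cons a r) ∂μ) (Measure.pi fun _ => μ) :=
  hG.comp_fin_cons.integral_prod_right

lemma MeasureTheory.Integrable.ae_integrable_fin_cons (hG : Integrable G (Measure.pi fun _ => μ)) :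
    ∀ᵐ r ∂(Measure.pi fun _ => μ), Integrable (fun a => G (Fin.cons a r)) μ :=
  hG.comp_fin_cons.prod_left_ae

lemma ae_ae_fin_cons {P : (Fin (n + 1) → α) → Prop} (h : ∀ᵐ x ∂(Measure.pi fun _ => μ), P x) :
    ∀ᵐ r ∂(Measure.pi fun _ => μ), ∀ᵐ a ∂μ, P (Fin.cons a r) :=
  Measure.ae_ae_of_ae_prod <| Measure.measurePreserving_swap.quasiMeasurePreserving.ae <|
    measurePreserving_fin_cons.quasiMeasurePreserving.ae h

end Fubini

section Gibbs

variable {α : Type*} [MeasurableSpace α] {μ : Measure α}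

lemma sub_le_mul_log_div {u v : ℝ} (hu : 0 < u) (hv : 0 < v) : u - v ≤ u * Real.log (u / v) := by
  have h := Real.one_sub_inv_le_log_of_pos (div_pos hu hv)
  rw [inv_div] at h
  calc u - v = u * (1 - v / u) := by field_simp
    _ ≤ u * Real.log (u / v) := mul_le_mul_of_nonneg_left h hu.le

lemma le_integral_of_mul_log_div_le {u b J : α → ℝ} {m c A : ℝ} (hu : ∀ a, 0 < u a)
    (hb : ∀ a, 0 < b a) (hm : 0 < m) (hc : 0 ≤ c) (hum : ∫ a, u a ∂μ = m)
    (hb1 : ∫ a, b a ∂μ = 1) (hJ : Integrable J μ)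
    (hle : ∀ᵐ a ∂μ, u a * c * (Real.log (u a / (m * b a)) + A) ≤ J a) :
    m * c * A ≤ ∫ a, J a ∂μ := by
  have hu_int : Integrable u μ := .of_integral_ne_zero (hum ▸ hm.ne')
  have hb_int : Integrable b μ := .of_integral_ne_zero (by simp [hb1])
  have hL_int : Integrable (fun a => (c + c * A) * u a - c * m * b a) μ :=
    (hu_int.const_mul _).sub (hb_int.const_mul _)
  have hLJ : ∀ᵐ a ∂μ, (c + c * A) * u a - c * m * b a ≤ J a := by
    filter_upwards [hle] with a ha
    have := mul_le_mul_of_nonneg_left (sub_le_mul_log_div (hu a) (mul_pos hm (hb a))) hc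
    linarith
  calc m * c * A = ∫ a, (c + c * A) * u a - c * m * b a ∂μ := by
        rw [integral_sub (hu_int.const_mul _) (hb_int.const_mul _), integral_const_mul,
          integral_const_mul, hum, hb1]
        ring
    _ ≤ ∫ a, J a ∂μ := integral_mono_ae hL_int hJ hLJ

end Gibbs

section ChainIntegrals

variable {α : Type*} [MeasurableSpace α] {μ : Measure α} {K : ℕ}

theorem integral_chain_mul_comp_last [SigmaFinite μ] {F : Fin K → α → α → ℝ}
    {q : Fin (K + 1) → α → ℝ} (hq : ∀ k x, q k.succ x = ∫ y, q k.castSucc y * F k y x ∂μ)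
    {h : α → ℝ} (hint : Integrable (fun x => q 0 (x 0) * chainWeight F x * h (x (Fin.last K)))
      (Measure.pi fun _ => μ)) :
    ∫ x, q 0 (x 0) * chainWeight F x * h (x (Fin.last K)) ∂(Measure.pi fun _ => μ) =
      ∫ y, q (Fin.last K) y * h y ∂μ := by
  induction K with
  | zero =>
    simpa [chainWeight] using
      (measurePreserving_piUnique (fun _ : Fin 1 => μ)).integral_comp' (fun y => q 0 y * h y)
  | succ K ih =>
    set G := fun x : Fin (K + 2) → α => q 0 (x 0) * chainWeight F x * h (x (Fin.last (K + 1)))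
    have hsec : ∀ r : Fin (K + 1) → α, ∫ a, G (Fin.cons a r) ∂μ =
        q 1 (r 0) * chainWeight (fun k => F k.succ) r * h (r (Fin.last K)) := by
      intro r
      simp only [G, chainWeight_cons, Fin.cons_zero, ← Fin.succ_last, Fin.cons_succ, ← mul_assoc]
      rw [integral_mul_const, integral_mul_const]
      congr 2
      exact (hq 0 (r 0)).symm
    rw [integral_pi_fin_succ hint, integral_congr_ae (.of_forall hsec)]
    exact ih (q := fun j => q j.succ) (F := fun k => F k.succ) (fun k x => hq k.succ x)
      (hint.integral_fin_cons.congr (.of_forall hsec))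

/-- Stated for every integrable majorant `J`: integrating out `x_0` only produces an integrable
majorant of the integrand of the shorter chain, whose own integrability is not known. -/
theorem integral_nonneg_of_reversalKL_le [SigmaFinite μ] {F B : Fin K → α → α → ℝ}
    {q : Fin (K + 1) → α → ℝ} (hq : ∀ k x, q k.succ x = ∫ y, q k.castSucc y * F k y x ∂μ)
    (hqpos : ∀ k x, 0 < q k x) (hFpos : ∀ k y x, 0 < F k y x) (hBpos : ∀ k y x, 0 < B k y x)
    (hB : ∀ k y, ∫ x, B k y x ∂μ = 1) {J : (Fin (K + 1) → α) → ℝ}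
    (hJ : Integrable J (Measure.pi fun _ => μ))
    (hle : ∀ᵐ x ∂(Measure.pi fun _ => μ), q 0 (x 0) * chainWeight F x *
      Real.log (chainWeight (fun k => flip (timeReversal q F k)) x /
        chainWeight (fun k => flip (B k)) x) ≤ J x) :
    0 ≤ ∫ x, J x ∂(Measure.pi fun _ => μ) := by
  induction K with
  | zero => exact integral_nonneg_of_ae (hle.mono fun x hx => by simpa [chainWeight] using hx)
  | succ K ih =>
    rw [integral_pi_fin_succ hJ]
    refine ih (q := fun j => q j.succ) (F := fun k => F k.succ) (B := fun k => B k.succ)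
      (fun k x => hq k.succ x) (fun _ _ => hqpos _ _) (fun _ _ _ => hFpos _ _ _)
      (fun _ _ _ => hBpos _ _ _) (fun _ _ => hB _ _) hJ.integral_fin_cons ?_
    filter_upwards [ae_ae_fin_cons hle, hJ.ae_integrable_fin_cons] with r hr hJr
    refine le_integral_of_mul_log_div_le (u := fun a => q 0 a * F 0 a (r 0))
      (b := fun a => B 0 (r 0) a) (fun _ => mul_pos (hqpos _ _) (hFpos _ _ _))
      (fun _ => hBpos _ _ _) (hqpos 1 (r 0)) (chainWeight_pos (fun _ _ _ => hFpos _ _ _) r).le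
      (hq 0 (r 0)).symm (hB 0 (r 0)) hJr ?_
    filter_upwards [hr] with a ha
    exact le_of_eq_of_le (mul_log_chainWeight_timeReversal_div_cons hqpos hFpos hBpos a r).symm ha

variable {F : Fin K → α → α → ℝ} {q : Fin (K + 1) → α → ℝ} {π : α → ℝ}

lemma integrable_chain_mul_log_last (hqpos : ∀ k x, 0 < q k x) (hFpos : ∀ k y x, 0 < F k y x)
    (hπpos : ∀ x, 0 < π x) {w : (Fin (K + 1) → α) → ℝ} (hw : ∀ x, 0 < w x)
    (hQP : Integrable (fun x => q 0 (x 0) * chainWeight F x *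
      Real.log (q 0 (x 0) * chainWeight F x / (π (x (Fin.last K)) * w x))) (Measure.pi fun _ => μ))
    (hcond : Integrable (fun x => q 0 (x 0) * chainWeight F x *
      Real.log (chainWeight (fun k => flip (timeReversal q F k)) x / w x)) (Measure.pi fun _ => μ)) :
    Integrable (fun x => q 0 (x 0) * chainWeight F x *
      Real.log (q (Fin.last K) (x (Fin.last K)) / π (x (Fin.last K)))) (Measure.pi fun _ => μ) :=
  (hQP.sub hcond).congr <| .of_forall fun x => by
    simp only [Pi.sub_apply, log_chain_div_eq hqpos hFpos hπpos (hw x)]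
    ring

theorem integral_chain_mul_log_div [SigmaFinite μ]
    (hq : ∀ k x, q k.succ x = ∫ y, q k.castSucc y * F k y x ∂μ)
    (hqpos : ∀ k x, 0 < q k x) (hFpos : ∀ k y x, 0 < F k y x) (hπpos : ∀ x, 0 < π x)
    (hlast : Integrable (fun x => q 0 (x 0) * chainWeight F x *
      Real.log (q (Fin.last K) (x (Fin.last K)) / π (x (Fin.last K)))) (Measure.pi fun _ => μ))
    {w : (Fin (K + 1) → α) → ℝ} (hw : ∀ x, 0 < w x)
    (hcond : Integrable (fun x => q 0 (x 0) * chainWeight F x *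
      Real.log (chainWeight (fun k => flip (timeReversal q F k)) x / w x)) (Measure.pi fun _ => μ)) :
    ∫ x, q 0 (x 0) * chainWeight F x * Real.log (q 0 (x 0) * chainWeight F x /
        (π (x (Fin.last K)) * w x)) ∂(Measure.pi fun _ => μ) =
      ∫ y, q (Fin.last K) y * Real.log (q (Fin.last K) y / π y) ∂μ +
        ∫ x, q 0 (x 0) * chainWeight F x *
          Real.log (chainWeight (fun k => flip (timeReversal q F k)) x / w x)
          ∂(Measure.pi fun _ => μ) := by
  simp_rw [log_chain_div_eq hqpos hFpos hπpos (hw _), mul_add]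
  rw [integral_add hlast hcond,
    integral_chain_mul_comp_last (h := fun y => Real.log (q (Fin.last K) y / π y)) hq hlast]

theorem integral_chain_mul_log_div_timeReversal [SigmaFinite μ]
    (hq : ∀ k x, q k.succ x = ∫ y, q k.castSucc y * F k y x ∂μ)
    (hqpos : ∀ k x, 0 < q k x) (hFpos : ∀ k y x, 0 < F k y x) (hπpos : ∀ x, 0 < π x)
    (hlast : Integrable (fun x => q 0 (x 0) * chainWeight F x *
      Real.log (q (Fin.last K) (x (Fin.last K)) / π (x (Fin.last K)))) (Measure.pi fun _ => μ)) :
    ∫ x, q 0 (x 0) * chainWeight F x * Real.log (q 0 (x 0) * chainWeight F x /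
        (π (x (Fin.last K)) * chainWeight (fun k => flip (timeReversal q F k)) x))
        ∂(Measure.pi fun _ => μ) =
      ∫ y, q (Fin.last K) y * Real.log (q (Fin.last K) y / π y) ∂μ := by
  have hrev := chainWeight_timeReversal_pos hqpos hFpos
  simp_rw [log_chain_div_eq hqpos hFpos hπpos (hrev _), div_self (hrev _).ne', Real.log_one,
    add_zero]
  exact integral_chain_mul_comp_last (h := fun y => Real.log (q (Fin.last K) y / π y)) hq hlast

end ChainIntegrals

/-- `F k y x` is the density of moving from `y` to `x` at step `k+1`; `B k y x` is the backward
density of `x_k = x` given `x_{k+1} = y`. -/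
theorem ais_kl_chain_rule_and_optimal_backward_kernels_general
    (d K : ℕ)
    (π0 π : (Fin d → ℝ) → ℝ)
    (F : Fin K → (Fin d → ℝ) → (Fin d → ℝ) → ℝ)
    (B : Fin K → (Fin d → ℝ) → (Fin d → ℝ) → ℝ)
    (q : Fin (K + 1) → (Fin d → ℝ) → ℝ)
    (hq0 : q 0 = π0)
    (hqrec : ∀ (k : Fin K) (x : Fin d → ℝ),
      q k.succ x = ∫ y, q k.castSucc y * F k y x)
    (hπpos : ∀ x, 0 < π x)
    (hFpos : ∀ k y x, 0 < F k y x) (hBpos : ∀ k y x, 0 < B k y x)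
    (hqpos : ∀ k x, 0 < q k x)
    (hBnorm : ∀ (k : Fin K) (y : Fin d → ℝ), (∫ x, B k y x) = 1)
    (hQP_int : Integrable (fun x : Fin (K + 1) → Fin d → ℝ =>
      (π0 (x 0) * ∏ k : Fin K, F k (x k.castSucc) (x k.succ)) *
        Real.log ((π0 (x 0) * ∏ k : Fin K, F k (x k.castSucc) (x k.succ)) /
          (π (x (Fin.last K)) * ∏ k : Fin K, B k (x k.succ) (x k.castSucc)))))
    (hcond_int : Integrable (fun x : Fin (K + 1) → Fin d → ℝ =>
      (π0 (x 0) * ∏ k : Fin K, F k (x k.castSucc) (x k.succ)) *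
        Real.log ((∏ k : Fin K,
            q k.castSucc (x k.castSucc) * F k (x k.castSucc) (x k.succ) /
              q k.succ (x k.succ)) /
          (∏ k : Fin K, B k (x k.succ) (x k.castSucc))))) :
    -- KL(Q||P) = KL(q_K||π) + E_{q_K}[KL(Q(·|x_K)||P(·|x_K))]
    ((∫ x : Fin (K + 1) → Fin d → ℝ,
        (π0 (x 0) * ∏ k : Fin K, F k (x k.castSucc) (x k.succ)) *
          Real.log ((π0 (x 0) * ∏ k : Fin K, F k (x k.castSucc) (x k.succ)) /
            (π (x (Fin.last K)) * ∏ k : Fin K, B k (x k.succ) (x k.castSucc))))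
      = (∫ y, q (Fin.last K) y * Real.log (q (Fin.last K) y / π y)) +
        (∫ x : Fin (K + 1) → Fin d → ℝ,
          (π0 (x 0) * ∏ k : Fin K, F k (x k.castSucc) (x k.succ)) *
            Real.log ((∏ k : Fin K,
                q k.castSucc (x k.castSucc) * F k (x k.castSucc) (x k.succ) /
                  q k.succ (x k.succ)) /
              (∏ k : Fin K, B k (x k.succ) (x k.castSucc)))))
    ∧
    -- the optimal backward kernels B_k^opt achieve KL(Q||P^opt) = KL(q_K||π)
    ((∫ x : Fin (K + 1) → Fin d → ℝ,
        (π0 (x 0) * ∏ k : Fin K, F k (x k.castSucc) (x k.succ)) *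
          Real.log ((π0 (x 0) * ∏ k : Fin K, F k (x k.castSucc) (x k.succ)) /
            (π (x (Fin.last K)) * ∏ k : Fin K,
              q k.castSucc (x k.castSucc) * F k (x k.castSucc) (x k.succ) /
                q k.succ (x k.succ))))
      = ∫ y, q (Fin.last K) y * Real.log (q (Fin.last K) y / π y))
    ∧
    -- KL(q_K||π) is a lower bound for any choice of backward kernels B
    ((∫ y, q (Fin.last K) y * Real.log (q (Fin.last K) y / π y)) ≤
      ∫ x : Fin (K + 1) → Fin d → ℝ,
        (π0 (x 0) * ∏ k : Fin K, F k (x k.castSucc) (x k.succ)) *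
          Real.log ((π0 (x 0) * ∏ k : Fin K, F k (x k.castSucc) (x k.succ)) /
            (π (x (Fin.last K)) * ∏ k : Fin K, B k (x k.succ) (x k.castSucc)))) := by
  subst hq0
  have hback : ∀ x, 0 < chainWeight (fun k => flip (B k)) x :=
    chainWeight_pos fun _ _ _ => hBpos _ _ _
  have hlast := integrable_chain_mul_log_last hqpos hFpos hπpos hback hQP_int hcond_int
  have hchain := integral_chain_mul_log_div hqrec hqpos hFpos hπpos hlast hback hcond_int
  refine ⟨hchain, integral_chain_mul_log_div_timeReversal hqrec hqpos hFpos hπpos hlast, ?_⟩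
  have hgibbs := integral_nonneg_of_reversalKL_le hqrec hqpos hFpos hBpos hBnorm hcond_int
    (.of_forall fun _ => le_rfl)
  exact (le_add_of_nonneg_right hgibbs).trans_eq hchain.symm

/-- KL chain rule for AIS extended distributions and optimality of the
time-reversal backward kernels. `F k y x` is the density of moving from `y`
to `x` at step `k+1`; `B k y x` is the backward density of `x_k = x` given
`x_{k+1} = y`. -/
theorem ais_kl_chain_rule_and_optimal_backward_kernels
    (d K : ℕ)
    (π0 π : (Fin d → ℝ) → ℝ)
    (F : Fin K → (Fin d → ℝ) → (Fin d → ℝ) → ℝ)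
    (B : Fin K → (Fin d → ℝ) → (Fin d → ℝ) → ℝ)
    (q : Fin (K + 1) → (Fin d → ℝ) → ℝ)
    (hq0 : q 0 = π0)
    (hqrec : ∀ (k : Fin K) (x : Fin d → ℝ),
      q k.succ x = ∫ y, q k.castSucc y * F k y x)
    (hπ0pos : ∀ x, 0 < π0 x) (hπpos : ∀ x, 0 < π x)
    (hπ0norm : (∫ x, π0 x) = 1) (hπnorm : (∫ x, π x) = 1)
    (hFpos : ∀ k y x, 0 < F k y x) (hBpos : ∀ k y x, 0 < B k y x)
    (hqpos : ∀ k x, 0 < q k x)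
    (hFnorm : ∀ (k : Fin K) (y : Fin d → ℝ), (∫ x, F k y x) = 1)
    (hBnorm : ∀ (k : Fin K) (y : Fin d → ℝ), (∫ x, B k y x) = 1)
    (hQP_int : Integrable (fun x : Fin (K + 1) → Fin d → ℝ =>
      (π0 (x 0) * ∏ k : Fin K, F k (x k.castSucc) (x k.succ)) *
        Real.log ((π0 (x 0) * ∏ k : Fin K, F k (x k.castSucc) (x k.succ)) /
          (π (x (Fin.last K)) * ∏ k : Fin K, B k (x k.succ) (x k.castSucc)))))
    (hKLfin_int : Integrable (fun y : Fin d → ℝ =>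
      q (Fin.last K) y * Real.log (q (Fin.last K) y / π y)))
    (hcond_int : Integrable (fun x : Fin (K + 1) → Fin d → ℝ =>
      (π0 (x 0) * ∏ k : Fin K, F k (x k.castSucc) (x k.succ)) *
        Real.log ((∏ k : Fin K,
            q k.castSucc (x k.castSucc) * F k (x k.castSucc) (x k.succ) /
              q k.succ (x k.succ)) /
          (∏ k : Fin K, B k (x k.succ) (x k.castSucc))))) :
    -- KL(Q||P) = KL(q_K||π) + E_{q_K}[KL(Q(·|x_K)||P(·|x_K))]
    ((∫ x : Fin (K + 1) → Fin d → ℝ,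
        (π0 (x 0) * ∏ k : Fin K, F k (x k.castSucc) (x k.succ)) *
          Real.log ((π0 (x 0) * ∏ k : Fin K, F k (x k.castSucc) (x k.succ)) /
            (π (x (Fin.last K)) * ∏ k : Fin K, B k (x k.succ) (x k.castSucc))))
      = (∫ y, q (Fin.last K) y * Real.log (q (Fin.last K) y / π y)) +
        (∫ x : Fin (K + 1) → Fin d → ℝ,
          (π0 (x 0) * ∏ k : Fin K, F k (x k.castSucc) (x k.succ)) *
            Real.log ((∏ k : Fin K,
                q k.castSucc (x k.castSucc) * F k (x k.castSucc) (x k.succ) /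
                  q k.succ (x k.succ)) /
              (∏ k : Fin K, B k (x k.succ) (x k.castSucc)))))
    ∧
    -- the optimal backward kernels B_k^opt achieve KL(Q||P^opt) = KL(q_K||π)
    ((∫ x : Fin (K + 1) → Fin d → ℝ,
        (π0 (x 0) * ∏ k : Fin K, F k (x k.castSucc) (x k.succ)) *
          Real.log ((π0 (x 0) * ∏ k : Fin K, F k (x k.castSucc) (x k.succ)) /
            (π (x (Fin.last K)) * ∏ k : Fin K,
              q k.castSucc (x k.castSucc) * F k (x k.castSucc) (x k.succ) /
                q k.succ (x k.succ))))
      = ∫ y, q (Fin.last K) y * Real.log (q (Fin.last K) y / π y))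
    ∧
    -- KL(q_K||π) is a lower bound for any choice of backward kernels B
    ((∫ y, q (Fin.last K) y * Real.log (q (Fin.last K) y / π y)) ≤
      ∫ x : Fin (K + 1) → Fin d → ℝ,
        (π0 (x 0) * ∏ k : Fin K, F k (x k.castSucc) (x k.succ)) *
          Real.log ((π0 (x 0) * ∏ k : Fin K, F k (x k.castSucc) (x k.succ)) /
            (π (x (Fin.last K)) * ∏ k : Fin K, B k (x k.succ) (x k.castSucc)))) :=
  ais_kl_chain_rule_and_optimal_backward_kernels_general d K π0 π F B q hq0 hqrec hπpos hFpos hBpos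
    hqpos hBnorm hQP_int hcond_int
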